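/- Let L, R > 0. For every real σ > 2R/L and every z with 0 ≤ z ≤ 1/√2, one has 0 ≤ (z/√(1−z²)) · ( L/R − σ^{−1}(1/(2 − z²) − L/(2R)) ) < L/R + (L/(2R))². (This expresses the bound −L/R − (L/(2R))² < ∂η_2/∂ν(zσ, σ) ≤ 0 on the range 0 ≤ z ≤ 1/√2.) -/

import Mathlib

/-!
Write `m = L / (2R)`, so that `L / R = 2m`, `0 < σ⁻¹ < m`, and `c = 1 / (2 - z²) ∈ [1/2, 2/3]`.
The bracket `2m - σ⁻¹ (c - m)` then lies in `[0, 2m + m²)`, while `z ≤ 1/√2` is exactly the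
condition `z ≤ √(1 - z²)` making the prefactor `z / √(1 - z²)` lie in `[0, 1]`.
-/

open Real

lemma sq_le_half_of_le_inv_sqrt_two {z : ℝ} (hz0 : 0 ≤ z) (hz1 : z ≤ 1 / √2) : z ^ 2 ≤ 1 / 2 := by
  calc z ^ 2 ≤ (1 / √2) ^ 2 := pow_le_pow_left₀ hz0 hz1 2
    _ = 1 / 2 := by rw [div_pow, one_pow, sq_sqrt zero_le_two]

lemma div_sqrt_one_sub_sq_mem_Icc {z : ℝ} (hz0 : 0 ≤ z) (hz : z ^ 2 ≤ 1 / 2) :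
    z / √(1 - z ^ 2) ∈ Set.Icc 0 1 := by
  have hpos : 0 < √(1 - z ^ 2) := sqrt_pos.mpr (by linarith)
  refine ⟨div_nonneg hz0 hpos.le, (div_le_one hpos).mpr ?_⟩
  exact le_sqrt_of_sq_le (by linarith)

lemma inv_two_sub_sq_mem_Icc {z : ℝ} (hz : z ^ 2 ≤ 1 / 2) : 1 / (2 - z ^ 2) ∈ Set.Icc 0 2 := by
  have hpos : 0 < 2 - z ^ 2 := by linarith
  refine ⟨by positivity, (div_le_iff₀ hpos).mpr ?_⟩
  nlinarith [sq_nonneg z]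

lemma two_mul_sub_mul_sub_mem_Ico {a c m : ℝ} (ha : 0 < a) (ham : a < m) (hc0 : 0 ≤ c)
    (hc2 : c ≤ 2) : 2 * m - a * (c - m) ∈ Set.Ico 0 (2 * m + m ^ 2) := by
  have hac : a * c ≤ m * c := mul_le_mul_of_nonneg_right ham.le hc0
  have ham' : a * m < m * m := mul_lt_mul_of_pos_right ham (ha.trans ham)
  constructor <;> nlinarith [mul_nonneg ha.le hc0]

lemma inv_lt_of_div_lt {L R σ : ℝ} (hL : 0 < L) (hR : 0 < R) (hσ : 2 * R / L < σ) :
    σ⁻¹ < L / (2 * R) := by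
  simpa [inv_div] using inv_strictAnti₀ (by positivity) hσ

theorem stmt_16 (L R : ℝ) (hL : 0 < L) (hR : 0 < R) (σ : ℝ) (hσ : 2 * R / L < σ)
    (z : ℝ) (hz0 : 0 ≤ z) (hz1 : z ≤ 1 / Real.sqrt 2) :
    0 ≤ (z / Real.sqrt (1 - z ^ 2)) *
          (L / R - σ⁻¹ * (1 / (2 - z ^ 2) - L / (2 * R))) ∧
      (z / Real.sqrt (1 - z ^ 2)) *
          (L / R - σ⁻¹ * (1 / (2 - z ^ 2) - L / (2 * R))) <
        L / R + (L / (2 * R)) ^ 2 := by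
  have hz := sq_le_half_of_le_inv_sqrt_two hz0 hz1
  obtain ⟨ht0, ht1⟩ := div_sqrt_one_sub_sq_mem_Icc hz0 hz
  obtain ⟨hc0, hc2⟩ := inv_two_sub_sq_mem_Icc hz
  have hLR : L / R = 2 * (L / (2 * R)) := by field_simp
  have hσ0 : 0 < σ := (by positivity : 0 < 2 * R / L).trans hσ
  rw [hLR]
  obtain ⟨hE0, hE⟩ :=
    two_mul_sub_mul_sub_mem_Ico (inv_pos.mpr hσ0) (inv_lt_of_div_lt hL hR hσ) hc0 hc2
  exact ⟨mul_nonneg ht0 hE0, (mul_le_of_le_one_left hE0 ht1).trans_lt hE⟩
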